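/- arXiv:2106.12725 — 2 statements merged into one kernel-verified Lean document; each statement's English description precedes it below -/
import Mathlib

section
/- Let P be a string of length m ≥ 3τ−1 over {0,…,σ−1} with 3·per(P[1..3τ−1]) > τ (i.e., P is nonperiodic), and let X ∈ D be a prefix of P. Denote δ_text = |X| − 2τ and let P′ = P[δ_text+1..m] be the suffix of P obtained by removing its first δ_text characters. Let b_pre = |{i ∈ [1..n′] : T[s^lex_i..n] ≺ P′}| and e_pre = b_pre + |{i ∈ [1..n′] : P′ is a prefix of T[s^lex_i..n]}|. Then RangeBeg(P,T) = b_X + δ₁ and RangeEnd(P,T) = b_X + δ₂, where b_X = RangeBeg(X,T), δ₁ = |{i ∈ [1..b_pre] : the reverse of X is a prefix of W[i]}|, and δ₂ = |{i ∈ [1..e_pre] : the reverse of X is a prefix of W[i]}|. -/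
open scoped Classical

namespace CSA

/-- Character of a 1-indexed string at position `i` (junk value 0 out of range). -/
def idx (S : List ℕ) (i : ℕ) : ℕ := S.getD (i - 1) 0

/-- Substring `S[i..j)` in the 1-indexed, half-open convention. -/
def sub (S : List ℕ) (i j : ℕ) : List ℕ := (S.drop (i - 1)).take (j - i)

/-- Suffix `S[i..|S|]` (1-indexed). -/
def suf (S : List ℕ) (i : ℕ) : List ℕ := S.drop (i - 1)

/-- Length of the longest common prefix of two strings. -/
def lcp (A B : List ℕ) : ℕ := ((A.zip B).takeWhile fun p => p.1 == p.2).length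

/-- `LCE T j₁ j₂` is the length of the longest common prefix of `T[j₁..n]` and `T[j₂..n]`. -/
def LCE (T : List ℕ) (j₁ j₂ : ℕ) : ℕ := lcp (suf T j₁) (suf T j₂)

/-- `p` is a period of `S`. -/
def IsPeriod (S : List ℕ) (p : ℕ) : Prop :=
  1 ≤ p ∧ p ≤ S.length ∧ ∀ i, i + p < S.length → S.getD i 0 = S.getD (i + p) 0

/-- The shortest period of `S`. -/
noncomputable def per (S : List ℕ) : ℕ := sInf {p | IsPeriod S p}

/-- `R = {i ∈ [1..n−3τ+2] : per(T[i..i+3τ−1)) ≤ τ/3}`. -/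
noncomputable def R (T : List ℕ) (τ : ℕ) : Set ℕ :=
  {i | 1 ≤ i ∧ i + 3 * τ ≤ T.length + 2 ∧ 3 * per (sub T i (i + 3 * τ - 1)) ≤ τ}

/-- `rend(j) = min{j′ ≥ j : j′ ∉ R} + 3τ − 2`. -/
noncomputable def rend (T : List ℕ) (τ j : ℕ) : ℕ :=
  sInf {j' | j ≤ j' ∧ j' ∉ R T τ} + 3 * τ - 2

/-- `L-root(j)`: lexicographically smallest among `{T[j+t..j+t+p) : 0 ≤ t < p}`
where `p = per(T[j..j+3τ−1))`. -/
noncomputable def Lroot (T : List ℕ) (τ j : ℕ) : List ℕ :=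
  WithTop.untopD [] (((Finset.range (per (sub T j (j + 3 * τ - 1)))).image fun t =>
      sub T (j + t) (j + t + per (sub T j (j + 3 * τ - 1)))).min)

/-- `L-head(j)`: the (unique) `s ∈ [0..p)` with `T[j+s..j+s+p) = L-root(j)`. -/
noncomputable def Lhead (T : List ℕ) (τ j : ℕ) : ℕ :=
  sInf {s | s < per (sub T j (j + 3 * τ - 1)) ∧
    sub T (j + s) (j + s + per (sub T j (j + 3 * τ - 1))) = Lroot T τ j}

noncomputable def Lexp (T : List ℕ) (τ j : ℕ) : ℕ :=
  (rend T τ j - j - Lhead T τ j) / per (sub T j (j + 3 * τ - 1))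

noncomputable def Ltail (T : List ℕ) (τ j : ℕ) : ℕ :=
  (rend T τ j - j - Lhead T τ j) % per (sub T j (j + 3 * τ - 1))

noncomputable def rendfull (T : List ℕ) (τ j : ℕ) : ℕ := rend T τ j - Ltail T τ j

/-- `type(j) = +1` if `rend(j) ≤ n` and `T[rend(j)] > T[rend(j)−p]`, and `−1` otherwise. -/
noncomputable def typ (T : List ℕ) (τ j : ℕ) : ℤ :=
  if rend T τ j ≤ T.length ∧
      idx T (rend T τ j - per (sub T j (j + 3 * τ - 1))) < idx T (rend T τ j)
    then 1 else -1

noncomputable def Rminus (T : List ℕ) (τ : ℕ) : Set ℕ := {j ∈ R T τ | typ T τ j = -1}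

noncomputable def RH (T : List ℕ) (τ : ℕ) (H : List ℕ) : Set ℕ :=
  {j ∈ R T τ | Lroot T τ j = H}

noncomputable def RsH (T : List ℕ) (τ s : ℕ) (H : List ℕ) : Set ℕ :=
  {j ∈ R T τ | Lroot T τ j = H ∧ Lhead T τ j = s}

noncomputable def RminusH (T : List ℕ) (τ : ℕ) (H : List ℕ) : Set ℕ :=
  Rminus T τ ∩ RH T τ H

noncomputable def RminusSH (T : List ℕ) (τ s : ℕ) (H : List ℕ) : Set ℕ :=
  Rminus T τ ∩ RsH T τ s H

noncomputable def Rprime (T : List ℕ) (τ : ℕ) : Set ℕ := {j ∈ R T τ | j - 1 ∉ R T τ}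

/-- `Occ(P,S)`: the set of (1-indexed) starting positions of occurrences of `P` in `S`. -/
def OccSet (P S : List ℕ) : Set ℕ :=
  {j | 1 ≤ j ∧ j + P.length ≤ S.length + 1 ∧ sub S j (j + P.length) = P}

noncomputable def RangeBeg (P T : List ℕ) : ℕ :=
  Set.ncard {i | 1 ≤ i ∧ i ≤ T.length ∧ suf T i < P}

noncomputable def RangeEnd (P T : List ℕ) : ℕ := RangeBeg P T + (OccSet P T).ncard

/-- `ISA[j]`: the lexicographic rank of the suffix `T[j..n]` among all suffixes of `T`. -/
noncomputable def ISA (T : List ℕ) (j : ℕ) : ℕ :=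
  Set.ncard {j' | 1 ≤ j' ∧ j' ≤ T.length ∧ suf T j' ≤ suf T j}

/-- `succ_S(i) = min{j ∈ S ∪ {n−2τ+2} : j ≥ i}`. -/
noncomputable def succS (T : List ℕ) (τ : ℕ) (Sync : Set ℕ) (i : ℕ) : ℕ :=
  sInf {j | i ≤ j ∧ (j ∈ Sync ∨ j = T.length + 2 - 2 * τ)}

/-- The set `D` of distinguishing prefixes. -/
noncomputable def Dset (T : List ℕ) (τ : ℕ) (Sync : Set ℕ) : Set (List ℕ) :=
  {X | ∃ i, 1 ≤ i ∧ i + 3 * τ ≤ T.length + 2 ∧ i ∉ R T τ ∧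
    X = sub T i (succS T τ Sync i + 2 * τ)}

/-- `T^∞[i] = T[1 + ((i−1) mod n)]` for `i : ℤ`. -/
def tinf (T : List ℕ) (i : ℤ) : ℕ := idx T (((i - 1).emod (T.length : ℤ)).toNat + 1)

/-- `W[i]`: the reverse of `T^∞[s^lex_i − τ .. s^lex_i + 2τ)`. -/
def Wstr (T : List ℕ) (τ : ℕ) (slex : ℕ → ℕ) (i : ℕ) : List ℕ :=
  ((List.range (3 * τ)).map fun k => tinf T ((slex i : ℤ) - (τ : ℤ) + (k : ℤ))).reverse

/- Pattern versions of the `L`-decomposition functions. -/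

noncomputable def perP (τ : ℕ) (P : List ℕ) : ℕ := per (P.take (3 * τ - 1))

/-- A pattern is periodic if `|P| ≥ 3τ−1` and `per(P[1..3τ−1]) ≤ τ/3`. -/
noncomputable def Periodic (τ : ℕ) (P : List ℕ) : Prop :=
  3 * τ - 1 ≤ P.length ∧ 3 * perP τ P ≤ τ

noncomputable def pend (τ : ℕ) (P : List ℕ) : ℕ :=
  1 + perP τ P + lcp P (P.drop (perP τ P))

noncomputable def LrootP (τ : ℕ) (P : List ℕ) : List ℕ :=
  WithTop.untopD [] (((Finset.range (perP τ P)).image fun t => (P.drop t).take (perP τ P)).min)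

noncomputable def LheadP (τ : ℕ) (P : List ℕ) : ℕ :=
  sInf {s | s < perP τ P ∧ (P.drop s).take (perP τ P) = LrootP τ P}

noncomputable def LexpP (τ : ℕ) (P : List ℕ) : ℕ :=
  (pend τ P - 1 - LheadP τ P) / perP τ P

noncomputable def LtailP (τ : ℕ) (P : List ℕ) : ℕ :=
  (pend τ P - 1 - LheadP τ P) % perP τ P

noncomputable def pendfullP (τ : ℕ) (P : List ℕ) : ℕ := pend τ P - LtailP τ P

noncomputable def typP (τ : ℕ) (P : List ℕ) : ℤ :=
  if pend τ P ≤ P.length ∧ idx P (pend τ P - perP τ P) < idx P (pend τ P)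
    then 1 else -1

/-- `pow(H)`: the prefix of length `|H|·⌈τ/|H|⌉` of `H^∞`. -/
def powS (τ : ℕ) (H : List ℕ) : List ℕ :=
  (List.replicate ((τ + H.length - 1) / H.length) H).flatten


/-!
Write `X = T[i..q+2τ)` with `q = succ_S(i) ∈ S`, so that `δ = |X| - 2τ = q - i`. A suffix of `T`
is `≺ P` iff it is `≺ X` or it starts with `X` and is `≺ P`; the first kind is counted by
`RangeBeg(X,T)`. By consistency, an occurrence `j` of `X` makes `j + δ` synchronising, and
`T[j..n]` compares with `P` as `T[j+δ..n]` compares with `P′`. So occurrences of `X` correspond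
to the ranks `k` of synchronising positions whose window `W[k]` begins with the reverse of `X`
(the unique sentinel `0` stops a wrapped-around window from matching), and since the `s^lex_k`
are sorted, the ranks with `T[s^lex_k..n] ≺ P′` (or with prefix `P′`) form `[1..b_pre]`
(resp. `[1..e_pre]`). The same argument applies to `RangeEnd`, which counts the suffixes that
are `≺ P` or start with `P`.
-/

end CSA

namespace List

variable {α : Type*}

theorem prefix_iff_getD {A B : List α} (d : α) :
    A <+: B ↔ A.length ≤ B.length ∧ ∀ k < A.length, A.getD k d = B.getD k d := by
  rw [prefix_iff_getElem]
  refine ⟨fun ⟨hl, h⟩ => ⟨hl, fun k hk => ?_⟩, fun ⟨hl, h⟩ => ⟨hl, fun k hk => ?_⟩⟩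
  · rw [getD_eq_getElem _ _ hk, getD_eq_getElem _ _ (hk.trans_le hl), h]
  · have := h k hk
    rwa [getD_eq_getElem _ _ hk, getD_eq_getElem _ _ (hk.trans_le hl)] at this

theorem suffix_iff_getD {A B : List α} (d : α) :
    A <:+ B ↔ A.length ≤ B.length ∧
      ∀ k < A.length, A.getD k d = B.getD (B.length - A.length + k) d := by
  rw [suffix_iff_getElem]
  refine ⟨fun ⟨hl, h⟩ => ⟨hl, fun k hk => ?_⟩, fun ⟨hl, h⟩ => ⟨hl, fun k hk => ?_⟩⟩
  · rw [getD_eq_getElem _ _ hk, getD_eq_getElem _ _ (by omega), ← h k hk]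
    congr 1
    omega
  · have := h k hk
    rw [getD_eq_getElem _ _ hk, getD_eq_getElem _ _ (by omega)] at this
    rw [this]
    congr 1
    omega

theorem getD_map_range {β : Type*} (f : ℕ → β) {N k : ℕ} (hk : k < N) (d : β) :
    ((range N).map f).getD k d = f k := by
  rw [getD_eq_getElem _ _ (by simpa using hk)]
  simp

theorem eq_take_append_drop_of_prefix {X S P : List α} (hS : X <+: S) (hP : X <+: P) {d : ℕ}
    (hd : d ≤ X.length) : S = P.take d ++ S.drop d := by
  obtain ⟨s, rfl⟩ := hS
  obtain ⟨p, rfl⟩ := hP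
  rw [take_append_of_le_length hd, ← take_append_of_le_length (l₂ := s) hd, take_append_drop]

theorem prefix_iff_drop_prefix_drop_of_prefix {X S P : List α} (hS : X <+: S) (hP : X <+: P)
    {d : ℕ} (hd : d ≤ X.length) : P <+: S ↔ P.drop d <+: S.drop d := by
  calc P <+: S ↔ P.take d ++ P.drop d <+: P.take d ++ S.drop d := by
        rw [take_append_drop, ← eq_take_append_drop_of_prefix hS hP hd]
    _ ↔ _ := prefix_append_right_inj _

variable [LinearOrder α]

theorem append_lt_append_left_iff (C : List α) {A B : List α} : C ++ A < C ++ B ↔ A < B := by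
  induction C with
  | nil => rfl
  | cons c C ih => simpa [cons_lt_cons_iff] using ih

theorem lt_or_prefix_of_lt_of_prefix {A B P : List α} (h : A < B) (hP : P <+: B) :
    A < P ∨ P <+: A := by
  induction P generalizing A B with
  | nil => exact Or.inr nil_prefix
  | cons p P ih =>
    obtain ⟨t, rfl⟩ := hP
    cases A with
    | nil => exact Or.inl (nil_lt_cons _ _)
    | cons a A =>
      rcases cons_lt_cons_iff.mp h with hap | ⟨rfl, hAB⟩
      · exact Or.inl (cons_lt_cons_iff.mpr (Or.inl hap))
      · rcases ih hAB (prefix_append P t) with h' | h'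
        · exact Or.inl (cons_lt_cons_iff.mpr (Or.inr ⟨rfl, h'⟩))
        · exact Or.inr (cons_prefix_cons.mpr ⟨rfl, h'⟩)

theorem lt_iff_drop_lt_drop_of_prefix {X S P : List α} (hS : X <+: S) (hP : X <+: P)
    {d : ℕ} (hd : d ≤ X.length) : S < P ↔ S.drop d < P.drop d := by
  calc S < P ↔ P.take d ++ S.drop d < P.take d ++ P.drop d := by
        rw [take_append_drop, ← eq_take_append_drop_of_prefix hS hP hd]
    _ ↔ _ := append_lt_append_left_iff _

theorem lt_of_lt_of_prefix {S X P : List α} (h : S < X) (hP : X <+: P) : S < P :=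
  Classical.byContradiction fun hPS => List.le_trans hP.le hPS h

theorem lt_or_prefix_of_lt_of_lt_or_prefix {S S' A : List α} (h : S' < S)
    (hS : S < A ∨ A <+: S) : S' < A ∨ A <+: S' := by
  rcases hS with hS | hS
  · exact Or.inl (List.lt_trans h hS)
  · exact lt_or_prefix_of_lt_of_prefix h hS

end List

namespace CSA

theorem length_suf (T : List ℕ) (j : ℕ) : (suf T j).length = T.length - (j - 1) :=
  List.length_drop

theorem drop_suf (T : List ℕ) {j : ℕ} (hj : 1 ≤ j) (d : ℕ) :
    (suf T j).drop d = suf T (j + d) := by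
  simp only [suf, List.drop_drop]
  congr 1
  omega

theorem getD_suf (T : List ℕ) {j : ℕ} (hj : 1 ≤ j) (k : ℕ) :
    (suf T j).getD k 0 = idx T (j + k) := by
  simp only [suf, idx, List.getD_eq_getElem?_getD, List.getElem?_drop]
  rw [show j - 1 + k = j + k - 1 by omega]

theorem length_sub {T : List ℕ} {i k : ℕ} (hi : 1 ≤ i) (hik : i ≤ k) (hk : k ≤ T.length + 1) :
    (sub T i k).length = k - i := by
  simp only [sub, List.length_take, List.length_drop]
  omega

theorem drop_sub (T : List ℕ) {i : ℕ} (hi : 1 ≤ i) (k d : ℕ) :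
    (sub T i k).drop d = sub T (i + d) k := by
  simp only [sub, List.drop_take, List.drop_drop]
  rw [Nat.sub_sub, show i - 1 + d = i + d - 1 by omega]

theorem sub_add_eq_take_suf (T : List ℕ) (j k : ℕ) : sub T j (j + k) = (suf T j).take k := by
  rw [sub, suf, Nat.add_sub_cancel_left]

theorem eq_sub_of_prefix_suf {X T : List ℕ} {j : ℕ} (h : X <+: suf T j) :
    X = sub T j (j + X.length) := by
  rw [sub_add_eq_take_suf]
  exact List.prefix_iff_eq_take.mp h

theorem prefix_suf_iff {X T : List ℕ} {j : ℕ} (hj : 1 ≤ j) :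
    X <+: suf T j ↔ X.length ≤ T.length + 1 - j ∧ ∀ k < X.length, X.getD k 0 = idx T (j + k) := by
  rw [List.prefix_iff_getD 0, length_suf]
  simp only [getD_suf T hj]
  constructor <;> rintro ⟨hl, h⟩ <;> exact ⟨by omega, h⟩

theorem le_length_of_prefix_suf {X T : List ℕ} {j : ℕ} (hX : X ≠ []) (h : X <+: suf T j) :
    j ≤ T.length := by
  have := h.length_le
  rw [length_suf] at this
  have := List.length_pos_iff.mpr hX
  omega

theorem OccSet_eq_setOf_prefix_suf {P : List ℕ} (hP : P ≠ []) (T : List ℕ) :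
    OccSet P T = {j | 1 ≤ j ∧ j ≤ T.length ∧ P <+: suf T j} := by
  ext j
  simp only [OccSet, Set.mem_ofPred_eq]
  constructor
  · rintro ⟨hj, -, h⟩
    have hpre : P <+: suf T j := by
      rw [sub_add_eq_take_suf] at h
      exact h ▸ List.take_prefix _ _
    exact ⟨hj, le_length_of_prefix_suf hP hpre, hpre⟩
  · rintro ⟨hj, hjT, h⟩
    have := ((prefix_suf_iff hj).mp h).1
    exact ⟨hj, by omega, (eq_sub_of_prefix_suf h).symm⟩

theorem ncard_setOf_lt_or_prefix (f : ℕ → List ℕ) (N : ℕ) (A : List ℕ) :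
    {i | 1 ≤ i ∧ i ≤ N ∧ (f i < A ∨ A <+: f i)}.ncard =
      {i | 1 ≤ i ∧ i ≤ N ∧ f i < A}.ncard + {i | 1 ≤ i ∧ i ≤ N ∧ A <+: f i}.ncard := by
  have hsplit : {i | 1 ≤ i ∧ i ≤ N ∧ (f i < A ∨ A <+: f i)} =
      {i | 1 ≤ i ∧ i ≤ N ∧ f i < A} ∪ {i | 1 ≤ i ∧ i ≤ N ∧ A <+: f i} := by
    ext i
    simp only [Set.mem_ofPred_eq, Set.mem_union]
    tauto
  have hfin : ∀ s : Set ℕ, s ⊆ Set.Icc 1 N → s.Finite := fun s hs => (Set.finite_Icc 1 N).subset hs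
  rw [hsplit, Set.ncard_union_eq (Set.disjoint_left.mpr fun i hlt hpre => hpre.2.2.le hlt.2.2)
    (hfin _ fun i hi => ⟨hi.1, hi.2.1⟩) (hfin _ fun i hi => ⟨hi.1, hi.2.1⟩)]

theorem RangeEnd_eq_ncard {P : List ℕ} (hP : P ≠ []) (T : List ℕ) :
    RangeEnd P T = {i | 1 ≤ i ∧ i ≤ T.length ∧ (suf T i < P ∨ P <+: suf T i)}.ncard := by
  rw [ncard_setOf_lt_or_prefix (suf T), RangeEnd, RangeBeg, OccSet_eq_setOf_prefix_suf hP]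

theorem ncard_setOf_suf_eq_RangeBeg_add {X : List ℕ} (hX : X ≠ []) (T : List ℕ)
    (Q : List ℕ → Prop) (hlt : ∀ S, S < X → Q S) (hQ : ∀ S, Q S → S < X ∨ X <+: S) :
    {i | 1 ≤ i ∧ i ≤ T.length ∧ Q (suf T i)}.ncard =
      RangeBeg X T + {i | 1 ≤ i ∧ X <+: suf T i ∧ Q (suf T i)}.ncard := by
  have hsplit : {i | 1 ≤ i ∧ i ≤ T.length ∧ Q (suf T i)} =
      {i | 1 ≤ i ∧ i ≤ T.length ∧ suf T i < X} ∪ {i | 1 ≤ i ∧ X <+: suf T i ∧ Q (suf T i)} := by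
    ext i
    simp only [Set.mem_ofPred_eq, Set.mem_union]
    constructor
    · rintro ⟨hi, hiT, hQi⟩
      exact (hQ _ hQi).imp (fun h => ⟨hi, hiT, h⟩) (fun h => ⟨hi, h, hQi⟩)
    · rintro (⟨hi, hiT, h⟩ | ⟨hi, h, hQi⟩)
      · exact ⟨hi, hiT, hlt _ h⟩
      · exact ⟨hi, le_length_of_prefix_suf hX h, hQi⟩
  have hfin : ∀ s : Set ℕ, s ⊆ Set.Icc 1 T.length → s.Finite :=
    fun s hs => (Set.finite_Icc 1 T.length).subset hs
  rw [hsplit, Set.ncard_union_eq (Set.disjoint_left.mpr fun i hlt hpre => hpre.2.1.le hlt.2.2)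
    (hfin _ fun i hi => ⟨hi.1, hi.2.1⟩)
    (hfin _ fun i hi => ⟨hi.1, le_length_of_prefix_suf hX hi.2.1⟩), RangeBeg]


theorem getD_sub (T : List ℕ) {i j k : ℕ} (hi : 1 ≤ i) (hk : i + k < j) :
    (sub T i j).getD k 0 = idx T (i + k) := by
  obtain ⟨l, rfl⟩ : ∃ l, j = i + l := ⟨j - i, by omega⟩
  rw [sub_add_eq_take_suf, ← getD_suf T hi]
  simp only [List.getD_eq_getElem?_getD, List.getElem?_take]
  rw [if_pos (by omega)]

theorem tinf_natCast (T : List ℕ) {v : ℕ} (hv : 1 ≤ v) (hvT : v ≤ T.length) :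
    tinf T v = idx T v := by
  have hmod : ((v : ℤ) - 1).emod T.length = v - 1 := Int.emod_eq_of_lt (by omega) (by omega)
  rw [tinf, hmod]
  congr 1
  omega

theorem tinf_zero {T : List ℕ} (hT : T ≠ []) : tinf T 0 = idx T T.length := by
  have hpos := List.length_pos_iff.mpr hT
  have hmod : ((0 : ℤ) - 1).emod T.length = T.length - 1 := by
    change (-1 : ℤ) % T.length = T.length - 1
    rw [← Int.add_mul_emod_self_right (-1) 1, Int.emod_eq_of_lt (by omega) (by omega)]
    ring
  rw [tinf, hmod]
  congr 1
  omega

-- In `Wstr` the list `List.range (3 * τ)` is coerced elementwise to `List ℤ`.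
theorem Wstr_eq (T : List ℕ) (τ : ℕ) (slex : ℕ → ℕ) (k : ℕ) :
    Wstr T τ slex k = ((List.range (3 * τ)).map fun j : ℕ => tinf T (slex k - τ + j)).reverse := by
  simp [Wstr, ← List.map_eq_flatMap]

theorem reverse_prefix_Wstr_iff {T X : List ℕ} {τ d : ℕ} {slex : ℕ → ℕ} {k : ℕ}
    (hT0 : idx T T.length = 0) (hX0 : ∀ j, j + 1 < X.length → X.getD j 0 ≠ 0)
    (hXlen : X.length = d + 2 * τ) (hd : d ≤ τ) (hs : 1 ≤ slex k)
    (hsT : slex k + 2 * τ ≤ T.length + 1) :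
    X.reverse <+: Wstr T τ slex k ↔ d < slex k ∧ X <+: suf T (slex k - d) := by
  have hW : ∀ j < X.length, (List.map (fun j : ℕ => tinf T (slex k - τ + j))
      (List.range (3 * τ))).getD (3 * τ - X.length + j) 0 = tinf T (slex k - d + j) := by
    intro j hj
    rw [List.getD_map_range _ (by omega)]
    congr 1
    omega
  rw [Wstr_eq, List.reverse_prefix, List.suffix_iff_getD 0, List.length_map, List.length_range]
  by_cases hds : d < slex k
  · rw [prefix_suf_iff (by omega)]
    simp only [hds, true_and]
    refine and_congr (by omega) (forall₂_congr fun j hj => ?_)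
    rw [hW j hj, show (slex k : ℤ) - d + j = (slex k - d + j : ℕ) by omega,
      tinf_natCast T (by omega) (by omega)]
  -- The window would wrap around to `T^∞[0] = T[n] = 0`, which `X` has at most in its last place.
  · simp only [hds, false_and, iff_false, not_and, not_forall]
    intro _
    have hT : T ≠ [] := by rintro rfl; simp at hsT; omega
    refine ⟨d - slex k, by omega, fun h => hX0 (d - slex k) (by omega) ?_⟩
    rw [h, hW _ (by omega), show (slex k : ℤ) - d + (d - slex k : ℕ) = 0 by omega,
      tinf_zero hT, hT0]

section Dset

variable {T : List ℕ} {τ : ℕ} {Sync : Set ℕ} {X : List ℕ}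

theorem exists_sync_of_mem_Dset (hSyncRange : ∀ i ∈ Sync, 1 ≤ i ∧ i + 2 * τ ≤ T.length + 1)
    (hDens : ∀ i, 1 ≤ i → i + 3 * τ ≤ T.length + 2 → Sync ∩ Set.Ico i (i + τ) = ∅ → i ∈ R T τ)
    (hX : X ∈ Dset T τ Sync) :
    ∃ i q, 1 ≤ i ∧ i ≤ q ∧ q < i + τ ∧ q ∈ Sync ∧ X = sub T i (q + 2 * τ) := by
  obtain ⟨i, hi, hiT, hiR, rfl⟩ := hX
  obtain ⟨s, hsS, his, hsi⟩ :=
    Set.nonempty_iff_ne_empty.mpr fun h => hiR (hDens i hi hiT h)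
  have hsA : s ∈ {j | i ≤ j ∧ (j ∈ Sync ∨ j = T.length + 2 - 2 * τ)} := ⟨his, Or.inl hsS⟩
  have hqA : succS T τ Sync i ∈ {j | i ≤ j ∧ (j ∈ Sync ∨ j = T.length + 2 - 2 * τ)} :=
    Nat.sInf_mem ⟨s, hsA⟩
  have hqs : succS T τ Sync i ≤ s := Nat.sInf_le hsA
  have hqS : succS T τ Sync i ∈ Sync :=
    hqA.2.resolve_right fun h => by have := (hSyncRange s hsS).2; omega
  exact ⟨i, _, hi, hqA.1, by omega, hqS, rfl⟩

theorem ne_nil_of_mem_Dset (hSyncRange : ∀ i ∈ Sync, 1 ≤ i ∧ i + 2 * τ ≤ T.length + 1)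
    (hDens : ∀ i, 1 ≤ i → i + 3 * τ ≤ T.length + 2 → Sync ∩ Set.Ico i (i + τ) = ∅ → i ∈ R T τ)
    (hX : X ∈ Dset T τ Sync) : X ≠ [] := by
  obtain ⟨i, q, hi, hiq, hqi, hq, rfl⟩ := exists_sync_of_mem_Dset hSyncRange hDens hX
  rw [← List.length_pos_iff, length_sub hi (by omega) (hSyncRange q hq).2]
  omega

theorem reverse_prefix_Wstr_iff_of_mem_Dset (hlast : idx T T.length = 0)
    (huniq : ∀ i, 1 ≤ i → i < T.length → idx T i ≠ 0)
    (hSyncRange : ∀ i ∈ Sync, 1 ≤ i ∧ i + 2 * τ ≤ T.length + 1)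
    (hDens : ∀ i, 1 ≤ i → i + 3 * τ ≤ T.length + 2 → Sync ∩ Set.Ico i (i + τ) = ∅ → i ∈ R T τ)
    (hX : X ∈ Dset T τ Sync) {slex : ℕ → ℕ} {k : ℕ} (hk : slex k ∈ Sync) :
    X.reverse <+: Wstr T τ slex k ↔
      X.length - 2 * τ < slex k ∧ X <+: suf T (slex k - (X.length - 2 * τ)) := by
  obtain ⟨i, q, hi, hiq, hqi, hq, rfl⟩ := exists_sync_of_mem_Dset hSyncRange hDens hX
  have hqT := (hSyncRange q hq).2
  have hlen := length_sub (T := T) hi (by omega : i ≤ q + 2 * τ) hqT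
  refine reverse_prefix_Wstr_iff hlast (fun j hj => ?_) (by omega) (by omega)
    (hSyncRange _ hk).1 (hSyncRange _ hk).2
  rw [getD_sub T hi (by omega)]
  exact huniq _ (by omega) (by omega)

theorem add_mem_of_prefix_suf_of_mem_Dset
    (hSyncRange : ∀ i ∈ Sync, 1 ≤ i ∧ i + 2 * τ ≤ T.length + 1)
    (hCons : ∀ i j : ℕ, 1 ≤ i → i + 2 * τ ≤ T.length + 1 → 1 ≤ j → j + 2 * τ ≤ T.length + 1 →
      sub T i (i + 2 * τ) = sub T j (j + 2 * τ) → (i ∈ Sync ↔ j ∈ Sync))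
    (hDens : ∀ i, 1 ≤ i → i + 3 * τ ≤ T.length + 2 → Sync ∩ Set.Ico i (i + τ) = ∅ → i ∈ R T τ)
    (hX : X ∈ Dset T τ Sync) {j : ℕ} (hj : 1 ≤ j) (h : X <+: suf T j) :
    j + (X.length - 2 * τ) ∈ Sync := by
  obtain ⟨i, q, hi, hiq, hqi, hq, rfl⟩ := exists_sync_of_mem_Dset hSyncRange hDens hX
  have hqT := (hSyncRange q hq).2
  have hlen := length_sub (T := T) hi (by omega : i ≤ q + 2 * τ) hqT
  have hjT := ((prefix_suf_iff hj).mp h).1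
  have hocc := eq_sub_of_prefix_suf h
  rw [hlen] at hocc
  have hwin : sub T (j + (q - i)) (j + (q - i) + 2 * τ) = sub T q (q + 2 * τ) :=
    calc sub T (j + (q - i)) (j + (q - i) + 2 * τ)
        = (sub T j (j + (q + 2 * τ - i))).drop (q - i) := by
          rw [drop_sub T hj]; congr 1; omega
      _ = (sub T i (q + 2 * τ)).drop (q - i) := by rw [← hocc]
      _ = sub T q (q + 2 * τ) := by rw [drop_sub T hi]; congr 1; omega
  rw [hlen, show q + 2 * τ - i - 2 * τ = q - i by omega]
  exact (hCons _ q (by omega) (by omega) (by omega) hqT hwin).mpr hq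

end Dset

theorem eq_Icc_one_ncard {s : Set ℕ} {N : ℕ} (hs : s ⊆ Set.Icc 1 N)
    (hdown : ∀ i j, 1 ≤ i → i ≤ j → j ∈ s → i ∈ s) : s = Set.Icc 1 s.ncard := by
  rcases s.eq_empty_or_nonempty with rfl | hne
  · simp
  · have hbdd : BddAbove s := ⟨N, fun i hi => (hs hi).2⟩
    obtain ⟨m, rfl⟩ : ∃ m, s = Set.Icc 1 m :=
      ⟨sSup s, Set.Subset.antisymm (fun i hi => ⟨(hs hi).1, le_csSup hbdd hi⟩)
        fun i hi => hdown i _ hi.1 hi.2 (Nat.sSup_mem hne hbdd)⟩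
    simp

section Rank

variable {T : List ℕ} {n' : ℕ} {slex : ℕ → ℕ}

theorem injOn_of_sorted_suf
    (hslexSorted : ∀ i i', 1 ≤ i → i < i' → i' ≤ n' → suf T (slex i) < suf T (slex i')) :
    Set.InjOn slex (Set.Icc 1 n') :=
  Set.InjOn.of_comp (g := suf T) <| StrictMonoOn.injOn fun a ha b hb hab =>
    hslexSorted a b ha.1 hab hb.2

theorem setOf_rank_and_eq_setOf_le_ncard
    (hslexSorted : ∀ i i', 1 ≤ i → i < i' → i' ≤ n' → suf T (slex i) < suf T (slex i'))
    (Q : List ℕ → Prop) (hQ : ∀ S S', S' < S → Q S → Q S') (W : ℕ → Prop) :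
    {k | 1 ≤ k ∧ k ≤ n' ∧ Q (suf T (slex k)) ∧ W k} =
      {k | 1 ≤ k ∧ k ≤ {k | 1 ≤ k ∧ k ≤ n' ∧ Q (suf T (slex k))}.ncard ∧ W k} := by
  have hIcc := eq_Icc_one_ncard (s := {k | 1 ≤ k ∧ k ≤ n' ∧ Q (suf T (slex k))})
    (fun k hk => ⟨hk.1, hk.2.1⟩) fun i j hi hij ⟨_, hj, hQj⟩ =>
      ⟨hi, hij.trans hj, hij.eq_or_lt.elim (fun h => h ▸ hQj)
        fun h => hQ _ _ (hslexSorted i j hi h hj) hQj⟩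
  ext k
  have hk := Set.ext_iff.mp hIcc k
  simp only [Set.mem_ofPred_eq, Set.mem_Icc] at hk ⊢
  constructor
  · rintro ⟨h1, h2, h3, h4⟩
    exact ⟨h1, (hk.mp ⟨h1, h2, h3⟩).2, h4⟩
  · rintro ⟨h1, h2, h4⟩
    obtain ⟨-, h2', h3⟩ := hk.mpr ⟨h1, h2⟩
    exact ⟨h1, h2', h3, h4⟩

variable {Sync : Set ℕ} {τ δ : ℕ} {X : List ℕ}

theorem ncard_prefix_suf_eq_ncard_rank
    (hslexMem : ∀ i, 1 ≤ i → i ≤ n' → slex i ∈ Sync)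
    (hslexSurj : ∀ x ∈ Sync, ∃ i, 1 ≤ i ∧ i ≤ n' ∧ slex i = x)
    (hslexSorted : ∀ i i', 1 ≤ i → i < i' → i' ≤ n' → suf T (slex i) < suf T (slex i'))
    (hW : ∀ k, slex k ∈ Sync →
      (X.reverse <+: Wstr T τ slex k ↔ δ < slex k ∧ X <+: suf T (slex k - δ)))
    (hocc : ∀ j, 1 ≤ j → X <+: suf T j → j + δ ∈ Sync) (Q : ℕ → Prop) :
    {j | 1 ≤ j ∧ X <+: suf T j ∧ Q (j + δ)}.ncard =
      {k | 1 ≤ k ∧ k ≤ n' ∧ Q (slex k) ∧ X.reverse <+: Wstr T τ slex k}.ncard := by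
  have himage : {j | 1 ≤ j ∧ X <+: suf T j ∧ Q (j + δ)} =
      (fun k => slex k - δ) ''
        {k | 1 ≤ k ∧ k ≤ n' ∧ Q (slex k) ∧ X.reverse <+: Wstr T τ slex k} := by
    ext j
    constructor
    · rintro ⟨hj, hX, hQ⟩
      have hsync := hocc j hj hX
      obtain ⟨k, hk, hkn, hkj⟩ := hslexSurj _ hsync
      refine ⟨k, ⟨hk, hkn, hkj ▸ hQ, (hW k (hkj ▸ hsync)).mpr ?_⟩, ?_⟩
      · rw [hkj, Nat.add_sub_cancel]
        exact ⟨by omega, hX⟩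
      · show slex k - δ = j
        omega
    · rintro ⟨k, ⟨hk, hkn, hQ, hWk⟩, rfl⟩
      obtain ⟨hδ, hX⟩ := (hW k (hslexMem k hk hkn)).mp hWk
      show 1 ≤ slex k - δ ∧ X <+: suf T (slex k - δ) ∧ Q (slex k - δ + δ)
      exact ⟨by omega, hX, by rwa [Nat.sub_add_cancel hδ.le]⟩
  rw [himage, Set.InjOn.ncard_image]
  intro a ha b hb hab
  have hδa := ((hW a (hslexMem a ha.1 ha.2.1)).mp ha.2.2.2).1
  have hδb := ((hW b (hslexMem b hb.1 hb.2.1)).mp hb.2.2.2).1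
  exact injOn_of_sorted_suf hslexSorted ⟨ha.1, ha.2.1⟩ ⟨hb.1, hb.2.1⟩ (by simp only at hab; omega)

theorem ncard_setOf_suf_eq_RangeBeg_add_ncard_rank (hXne : X ≠ [])
    (hslexMem : ∀ i, 1 ≤ i → i ≤ n' → slex i ∈ Sync)
    (hslexSurj : ∀ x ∈ Sync, ∃ i, 1 ≤ i ∧ i ≤ n' ∧ slex i = x)
    (hslexSorted : ∀ i i', 1 ≤ i → i < i' → i' ≤ n' → suf T (slex i) < suf T (slex i'))
    (hW : ∀ k, slex k ∈ Sync →
      (X.reverse <+: Wstr T τ slex k ↔ δ < slex k ∧ X <+: suf T (slex k - δ)))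
    (hocc : ∀ j, 1 ≤ j → X <+: suf T j → j + δ ∈ Sync) (Q Q' : List ℕ → Prop)
    (hlt : ∀ S, S < X → Q S) (hQX : ∀ S, Q S → S < X ∨ X <+: S)
    (hshift : ∀ S, X <+: S → (Q S ↔ Q' (S.drop δ))) (hQ' : ∀ S S', S' < S → Q' S → Q' S') :
    {i | 1 ≤ i ∧ i ≤ T.length ∧ Q (suf T i)}.ncard = RangeBeg X T +
      {k | 1 ≤ k ∧ k ≤ {k | 1 ≤ k ∧ k ≤ n' ∧ Q' (suf T (slex k))}.ncard ∧
        X.reverse <+: Wstr T τ slex k}.ncard := by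
  have hshift_suf : {i | 1 ≤ i ∧ X <+: suf T i ∧ Q (suf T i)} =
      {j | 1 ≤ j ∧ X <+: suf T j ∧ Q' (suf T (j + δ))} := by
    ext j
    refine and_congr_right fun hj => and_congr_right fun hX => ?_
    rw [hshift _ hX, drop_suf T hj]
  rw [ncard_setOf_suf_eq_RangeBeg_add hXne T Q hlt hQX, hshift_suf,
    ncard_prefix_suf_eq_ncard_rank hslexMem hslexSurj hslexSorted hW hocc (fun p => Q' (suf T p)),
    setOf_rank_and_eq_setOf_le_ncard hslexSorted Q' hQ']

end Rank

theorem statement_9_general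
    (n τ : ℕ) (T : List ℕ)
    (hlen : T.length = n)
    (hlast : idx T n = 0) (huniq : ∀ i, 1 ≤ i → i < n → idx T i ≠ 0)
    (Sync : Set ℕ)
    (hSyncRange : ∀ i ∈ Sync, 1 ≤ i ∧ i + 2 * τ ≤ n + 1)
    (hCons : ∀ i j : ℕ, 1 ≤ i → i + 2 * τ ≤ n + 1 → 1 ≤ j → j + 2 * τ ≤ n + 1 →
      sub T i (i + 2 * τ) = sub T j (j + 2 * τ) → (i ∈ Sync ↔ j ∈ Sync))
    (hDens : ∀ i : ℕ, 1 ≤ i → i + 3 * τ ≤ n + 2 →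
      (Sync ∩ Set.Ico i (i + τ) = ∅ ↔ i ∈ R T τ))
    (n' : ℕ)
    (slex : ℕ → ℕ)
    (hslexMem : ∀ i, 1 ≤ i → i ≤ n' → slex i ∈ Sync)
    (hslexSurj : ∀ x ∈ Sync, ∃ i, 1 ≤ i ∧ i ≤ n' ∧ slex i = x)
    (hslexSorted : ∀ i i', 1 ≤ i → i < i' → i' ≤ n' → suf T (slex i) < suf T (slex i'))
    (P : List ℕ)
    (X : List ℕ) (hX : X ∈ Dset T τ Sync) (hXpref : X <+: P)
    (bpre epre : ℕ)
    (hbpre : bpre = Set.ncard {i | 1 ≤ i ∧ i ≤ n' ∧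
      suf T (slex i) < P.drop (X.length - 2 * τ)})
    (hepre : epre = bpre + Set.ncard {i | 1 ≤ i ∧ i ≤ n' ∧
      P.drop (X.length - 2 * τ) <+: suf T (slex i)}) :
    RangeBeg P T = RangeBeg X T +
      Set.ncard {i | 1 ≤ i ∧ i ≤ bpre ∧ X.reverse <+: Wstr T τ slex i} ∧
    RangeEnd P T = RangeBeg X T +
      Set.ncard {i | 1 ≤ i ∧ i ≤ epre ∧ X.reverse <+: Wstr T τ slex i} := by
  subst hlen hbpre hepre
  have hDens' : ∀ i, 1 ≤ i → i + 3 * τ ≤ T.length + 2 →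
      Sync ∩ Set.Ico i (i + τ) = ∅ → i ∈ R T τ := fun i hi hiT => (hDens i hi hiT).mp
  have hXne := ne_nil_of_mem_Dset hSyncRange hDens' hX
  have hW := fun k (hk : slex k ∈ Sync) =>
    reverse_prefix_Wstr_iff_of_mem_Dset hlast huniq hSyncRange hDens' hX hk
  have hocc := fun j (hj : 1 ≤ j) (h : X <+: suf T j) =>
    add_mem_of_prefix_suf_of_mem_Dset hSyncRange hCons hDens' hX hj h
  have hδ : X.length - 2 * τ ≤ X.length := Nat.sub_le _ _
  refine ⟨ncard_setOf_suf_eq_RangeBeg_add_ncard_rank hXne hslexMem hslexSurj hslexSorted hW hocc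
    (· < P) (· < P.drop _) (fun S h => List.lt_of_lt_of_prefix h hXpref)
    (fun S h => List.lt_or_prefix_of_lt_of_prefix h hXpref)
    (fun S hS => List.lt_iff_drop_lt_drop_of_prefix hS hXpref hδ) (fun S S' => List.lt_trans), ?_⟩
  rw [RangeEnd_eq_ncard (fun h => hXne (List.prefix_nil.mp (h ▸ hXpref))),
    ← ncard_setOf_lt_or_prefix]
  exact ncard_setOf_suf_eq_RangeBeg_add_ncard_rank hXne hslexMem hslexSurj hslexSorted hW hocc
    (fun S => S < P ∨ P <+: S) (fun S => S < P.drop _ ∨ P.drop _ <+: S)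
    (fun S h => Or.inl (List.lt_of_lt_of_prefix h hXpref))
    (fun S h => h.elim (List.lt_or_prefix_of_lt_of_prefix · hXpref) (Or.inr <| hXpref.trans ·))
    (fun S hS => or_congr (List.lt_iff_drop_lt_drop_of_prefix hS hXpref hδ)
      (List.prefix_iff_drop_prefix_drop_of_prefix hS hXpref hδ))
    fun S S' => List.lt_or_prefix_of_lt_of_lt_or_prefix

/-- Lemma: pattern matching for nonperiodic patterns. -/
theorem statement_9
    (σ n τ : ℕ) (T : List ℕ)
    (hσ : 2 ≤ σ) (hn : 2 ≤ n) (hτ : 1 ≤ τ)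
    (hlen : T.length = n) (halph : ∀ c ∈ T, c < σ)
    (hlast : idx T n = 0) (huniq : ∀ i, 1 ≤ i → i < n → idx T i ≠ 0)
    (Sync : Set ℕ)
    (hSyncRange : ∀ i ∈ Sync, 1 ≤ i ∧ i + 2 * τ ≤ n + 1)
    (hCons : ∀ i j : ℕ, 1 ≤ i → i + 2 * τ ≤ n + 1 → 1 ≤ j → j + 2 * τ ≤ n + 1 →
      sub T i (i + 2 * τ) = sub T j (j + 2 * τ) → (i ∈ Sync ↔ j ∈ Sync))
    (hDens : ∀ i : ℕ, 1 ≤ i → i + 3 * τ ≤ n + 2 →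
      (Sync ∩ Set.Ico i (i + τ) = ∅ ↔ i ∈ R T τ))
    (n' : ℕ) (hn' : Sync.ncard = n')
    (slex : ℕ → ℕ)
    (hslexMem : ∀ i, 1 ≤ i → i ≤ n' → slex i ∈ Sync)
    (hslexSurj : ∀ x ∈ Sync, ∃ i, 1 ≤ i ∧ i ≤ n' ∧ slex i = x)
    (hslexSorted : ∀ i i', 1 ≤ i → i < i' → i' ≤ n' → suf T (slex i) < suf T (slex i'))
    (P : List ℕ) (m : ℕ) (hm : P.length = m) (halphP : ∀ c ∈ P, c < σ)
    (hm3 : 3 * τ - 1 ≤ m) (hnonper : τ < 3 * perP τ P)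
    (X : List ℕ) (hX : X ∈ Dset T τ Sync) (hXpref : X <+: P)
    (bpre epre : ℕ)
    (hbpre : bpre = Set.ncard {i | 1 ≤ i ∧ i ≤ n' ∧
      suf T (slex i) < P.drop (X.length - 2 * τ)})
    (hepre : epre = bpre + Set.ncard {i | 1 ≤ i ∧ i ≤ n' ∧
      P.drop (X.length - 2 * τ) <+: suf T (slex i)}) :
    RangeBeg P T = RangeBeg X T +
      Set.ncard {i | 1 ≤ i ∧ i ≤ bpre ∧ X.reverse <+: Wstr T τ slex i} ∧
    RangeEnd P T = RangeBeg X T +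
      Set.ncard {i | 1 ≤ i ∧ i ≤ epre ∧ X.reverse <+: Wstr T τ slex i} :=
  statement_9_general n τ T hlen hlast huniq Sync hSyncRange hCons hDens n' slex hslexMem hslexSurj
    hslexSorted P X hX hXpref bpre epre hbpre hepre
end CSA
end

section
/- For any periodic pattern P of length m over {0,…,σ−1}, the set Occ(P,T) is the disjoint union of Occᵃ(P,T) = {j ∈ R_{s,H} ∩ Occ(P,T) : L-exp(j) > L-exp(P)} and Occˢ(P,T) = {j ∈ R_{s,H} ∩ Occ(P,T) : L-exp(j) = L-exp(P)}, where s = L-head(P) and H = L-root(P). Equivalently, every j ∈ Occ(P,T) satisfies j ∈ R_{s,H} and L-exp(j) ≥ L-exp(P). -/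
open scoped Classical

namespace CSA

/-!
An occurrence of `P` at `j` makes `T[j..j+3τ−1)` equal to `P[1..3τ−1)`, so `j ∈ R` and the
period, the Lyndon root and the head computed at `j` coincide with those of `P`. Moreover the
`p`-periodic prefix `P[1..pend(P))` occurs at `j`, and every length-`(3τ−1)` window of it has
period at most `p`, so the run of `R` starting at `j` reaches at least to `j + pend(P) − 1`.
Hence `rend(j) − j ≥ pend(P) − 1`, which gives `L-exp(j) ≥ L-exp(P)`; the split into
`Occᵃ` and `Occˢ` is then the trichotomy of `≤`.
-/

section Lcp

lemma lcp_cons (a b : ℕ) (A B : List ℕ) :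
    lcp (a :: A) (b :: B) = if a = b then lcp A B + 1 else 0 := by
  unfold lcp
  by_cases h : a = b <;> simp [h]

lemma lcp_le_length_right : ∀ A B : List ℕ, lcp A B ≤ B.length
  | [], _ => by simp [lcp]
  | _ :: _, [] => by simp [lcp]
  | a :: A, b :: B => by
    rw [lcp_cons]
    split
    · simpa using lcp_le_length_right A B
    · simp

lemma getD_eq_of_lt_lcp : ∀ {A B : List ℕ} {i : ℕ}, i < lcp A B → A.getD i 0 = B.getD i 0
  | [], _, _, h => by simp [lcp] at h
  | _ :: _, [], _, h => by simp [lcp] at h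
  | a :: A, b :: B, i, h => by
    rw [lcp_cons] at h
    split at h
    · cases i with
      | zero => simpa
      | succ i => simpa using getD_eq_of_lt_lcp (A := A) (B := B) (by omega)
    · omega

lemma le_lcp : ∀ {A B : List ℕ} {k : ℕ}, k ≤ A.length → k ≤ B.length →
    (∀ i < k, A.getD i 0 = B.getD i 0) → k ≤ lcp A B
  | [], _, k, hA, _, _ => by simp at hA; omega
  | _ :: _, [], k, _, hB, _ => by simp at hB; omega
  | a :: A, b :: B, 0, _, _, _ => Nat.zero_le _
  | a :: A, b :: B, k + 1, hA, hB, hagree => by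
    have hab : a = b := by simpa using hagree 0 (by omega)
    rw [lcp_cons, if_pos hab]
    have := le_lcp (A := A) (B := B) (k := k) (by simpa using hA) (by simpa using hB)
      fun i hi => by simpa using hagree (i + 1) (by omega)
    omega

end Lcp

section Period

lemma getD_drop_take {S : List ℕ} {a b i : ℕ} (hi : i < b) :
    ((S.drop a).take b).getD i 0 = S.getD (a + i) 0 := by
  rw [List.getD_eq_getElem?_getD, List.getD_eq_getElem?_getD,
    List.getElem?_take, if_pos hi, List.getElem?_drop]

lemma getD_take {S : List ℕ} {b i : ℕ} (hi : i < b) : (S.take b).getD i 0 = S.getD i 0 := by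
  simpa using getD_drop_take (S := S) (a := 0) hi

lemma getD_drop {S : List ℕ} {a i : ℕ} : (S.drop a).getD i 0 = S.getD (a + i) 0 := by
  rw [List.getD_eq_getElem?_getD, List.getD_eq_getElem?_getD, List.getElem?_drop]

lemma isPeriod_length {S : List ℕ} (h : 1 ≤ S.length) : IsPeriod S S.length :=
  ⟨h, le_rfl, fun _ _ => by omega⟩

lemma per_le {S : List ℕ} {p : ℕ} (h : IsPeriod S p) : per S ≤ p := Nat.sInf_le h

lemma isPeriod_per {S : List ℕ} (h : 1 ≤ S.length) : IsPeriod S (per S) :=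
  Nat.sInf_mem (s := {p | IsPeriod S p}) ⟨S.length, isPeriod_length h⟩

lemma per_le_length (S : List ℕ) : per S ≤ S.length := by
  rcases Nat.eq_zero_or_pos S.length with h | h
  · have : {p | IsPeriod S p} = ∅ := by
      ext p
      simp only [Set.mem_ofPred_eq, Set.mem_empty_iff_false, iff_false]
      exact fun hp => by have := hp.1; have := hp.2.1; omega
    simp [per, this]
  · exact per_le (isPeriod_length h)

lemma IsPeriod.drop_take {S : List ℕ} {p a b : ℕ} (h : IsPeriod S p) (hb : p ≤ b)
    (hab : a + b ≤ S.length) : IsPeriod ((S.drop a).take b) p := by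
  obtain ⟨hp, -, hS⟩ := h
  have hlen : ((S.drop a).take b).length = b := by simp; omega
  refine ⟨hp, by omega, fun i hi => ?_⟩
  rw [hlen] at hi
  rw [getD_drop_take (by omega), getD_drop_take (by omega), hS (a + i) (by omega),
    Nat.add_assoc]

/-- A factor shorter than `p` has its own length as a period, so no bound `p ≤ b` is needed. -/
lemma per_drop_take_le {S : List ℕ} {p a b : ℕ} (h : IsPeriod S p) (hab : a + b ≤ S.length) :
    per ((S.drop a).take b) ≤ p := by
  rcases le_or_gt p b with hb | hb
  · exact per_le (h.drop_take hb hab)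
  · exact (per_le_length _).trans (by simp; omega)

lemma isPeriod_take_add_lcp {P : List ℕ} {p : ℕ} (hp : 1 ≤ p) (hpP : p ≤ P.length) :
    IsPeriod (P.take (p + lcp P (P.drop p))) p := by
  have hlcp : lcp P (P.drop p) ≤ P.length - p := by
    simpa using lcp_le_length_right P (P.drop p)
  refine ⟨hp, by simp; omega, fun i hi => ?_⟩
  simp only [List.length_take] at hi
  rw [getD_take (by omega), getD_take (by omega),
    getD_eq_of_lt_lcp (A := P) (B := P.drop p) (by omega), getD_drop, Nat.add_comm]

end Period

section PeriodicPattern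

variable {τ : ℕ} {P : List ℕ}

lemma perP_le_length (P : List ℕ) : perP τ P ≤ P.length :=
  (per_le_length _).trans (List.length_take_le' _ _)

lemma one_le_perP (hτ : 1 ≤ τ) (hP : Periodic τ P) : 1 ≤ perP τ P :=
  (isPeriod_per (S := P.take (3 * τ - 1)) (by simp; have := hP.1; omega)).1

lemma pend_sub_one_le_length (P : List ℕ) : pend τ P - 1 ≤ P.length := by
  have := lcp_le_length_right P (P.drop (perP τ P))
  have := perP_le_length (τ := τ) P
  simp only [pend, List.length_drop] at *
  omega

lemma le_pend_sub_one (hP : Periodic τ P) : 3 * τ - 1 ≤ pend τ P - 1 := by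
  rcases Nat.eq_zero_or_pos (3 * τ - 1) with h | h
  · omega
  have hlen : (P.take (3 * τ - 1)).length = 3 * τ - 1 := by simp; have := hP.1; omega
  have hper : IsPeriod (P.take (3 * τ - 1)) (perP τ P) := isPeriod_per (by omega)
  have := perP_le_length (τ := τ) P
  have : 3 * τ - 1 - perP τ P ≤ lcp P (P.drop (perP τ P)) := by
    refine le_lcp (by have := hP.1; omega) (by simp; have := hP.1; omega) fun i hi => ?_
    have := hper.2.2 i (by rw [hlen]; omega)
    rw [getD_take (by omega), getD_take (by omega)] at this
    rw [getD_drop, this, Nat.add_comm]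
  unfold pend
  omega

lemma isPeriod_take_pend (hτ : 1 ≤ τ) (hP : Periodic τ P) :
    IsPeriod (P.take (pend τ P - 1)) (perP τ P) := by
  have := isPeriod_take_add_lcp (one_le_perP hτ hP) (perP_le_length (τ := τ) P)
  rwa [show pend τ P - 1 = perP τ P + lcp P (P.drop (perP τ P)) by unfold pend; omega]

end PeriodicPattern

section Occurrence

variable {τ j : ℕ} {T P : List ℕ}

lemma sub_eq_of_mem_OccSet (hj : j ∈ OccSet P T) {a b : ℕ} (hab : a + b ≤ P.length) :
    sub T (j + a) (j + a + b) = (P.drop a).take b := by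
  obtain ⟨hj1, -, hocc⟩ := hj
  have hpre : (T.drop (j - 1)).take P.length = P := by
    simpa [sub] using hocc
  rw [← hpre, List.drop_take, List.take_take, sub, List.drop_drop,
    show min b (P.length - a) = b by omega, show j + a + b - (j + a) = b by omega,
    show j - 1 + a = j + a - 1 by omega]

lemma window_eq_of_mem_OccSet (hj : j ∈ OccSet P T) (hP : Periodic τ P) :
    sub T j (j + 3 * τ - 1) = P.take (3 * τ - 1) := by
  have := sub_eq_of_mem_OccSet hj (a := 0) (b := 3 * τ - 1) (by simpa using hP.1)
  rcases Nat.eq_zero_or_pos τ with rfl | hτ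
  · simp [sub]
  · simpa [Nat.add_sub_assoc (show 1 ≤ 3 * τ by omega)] using this

lemma per_window_eq_perP (hj : j ∈ OccSet P T) (hP : Periodic τ P) :
    per (sub T j (j + 3 * τ - 1)) = perP τ P := by
  rw [window_eq_of_mem_OccSet hj hP, perP]

lemma mem_R_of_mem_OccSet (hj : j ∈ OccSet P T) (hP : Periodic τ P) : j ∈ R T τ :=
  ⟨hj.1, by have := hj.2.1; have := hP.1; omega, by rw [per_window_eq_perP hj hP]; exact hP.2⟩

lemma sub_rotation_eq_of_mem_OccSet (hj : j ∈ OccSet P T) (hP : Periodic τ P) {t : ℕ}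
    (ht : t < perP τ P) : sub T (j + t) (j + t + perP τ P) = (P.drop t).take (perP τ P) :=
  sub_eq_of_mem_OccSet hj (by have := hP.1; have := hP.2; omega)

lemma Lroot_eq_LrootP_of_mem_OccSet (hj : j ∈ OccSet P T) (hP : Periodic τ P) :
    Lroot T τ j = LrootP τ P := by
  unfold Lroot LrootP
  rw [per_window_eq_perP hj hP]
  congr 2
  exact Finset.image_congr fun t ht =>
    sub_rotation_eq_of_mem_OccSet hj hP (Finset.mem_range.1 ht)

lemma Lhead_eq_LheadP_of_mem_OccSet (hj : j ∈ OccSet P T) (hP : Periodic τ P) :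
    Lhead T τ j = LheadP τ P := by
  unfold Lhead LheadP
  rw [per_window_eq_perP hj hP, Lroot_eq_LrootP_of_mem_OccSet hj hP]
  congr 1
  ext t
  exact and_congr_right fun ht => by rw [sub_rotation_eq_of_mem_OccSet hj hP ht]

lemma mem_RsH_of_mem_OccSet (hj : j ∈ OccSet P T) (hP : Periodic τ P) :
    j ∈ RsH T τ (LheadP τ P) (LrootP τ P) :=
  ⟨mem_R_of_mem_OccSet hj hP, Lroot_eq_LrootP_of_mem_OccSet hj hP,
    Lhead_eq_LheadP_of_mem_OccSet hj hP⟩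

lemma mem_R_of_mem_OccSet_of_lt (hτ : 1 ≤ τ) (hj : j ∈ OccSet P T) (hP : Periodic τ P)
    {j' : ℕ} (hjj' : j ≤ j') (hj' : j' + 3 * τ < j + pend τ P + 1) : j' ∈ R T τ := by
  have := pend_sub_one_le_length (τ := τ) P
  have := le_pend_sub_one hP
  refine ⟨by have := hj.1; omega, by have := hj.2.1; omega, ?_⟩
  have hwin : sub T j' (j' + 3 * τ - 1) =
      ((P.take (pend τ P - 1)).drop (j' - j)).take (3 * τ - 1) := by
    have hsub := sub_eq_of_mem_OccSet hj (a := j' - j) (b := 3 * τ - 1) (by omega)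
    rw [show j + (j' - j) = j' by omega, show j' + (3 * τ - 1) = j' + 3 * τ - 1 by omega]
      at hsub
    rw [hsub, List.drop_take, List.take_take, min_eq_left (by omega)]
  have := per_drop_take_le (isPeriod_take_pend hτ hP) (a := j' - j) (b := 3 * τ - 1)
    (by simp; omega)
  have := hP.2
  rw [hwin]
  omega

lemma le_rend_of_mem_OccSet (hτ : 1 ≤ τ) (hj : j ∈ OccSet P T) (hP : Periodic τ P) :
    j + (pend τ P - 1) ≤ rend T τ j := by
  have hrun : j + pend τ P + 1 - 3 * τ ≤ sInf {j' | j ≤ j' ∧ j' ∉ R T τ} := by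
    refine le_csInf ⟨j + T.length + 1, by omega, fun h => by have := h.2.1; omega⟩ ?_
    rintro j' ⟨hjj', hj'R⟩
    by_contra! hlt
    exact hj'R (mem_R_of_mem_OccSet_of_lt hτ hj hP hjj' (by omega))
  have := le_pend_sub_one hP
  unfold rend
  omega

lemma LexpP_le_Lexp_of_mem_OccSet (hτ : 1 ≤ τ) (hj : j ∈ OccSet P T) (hP : Periodic τ P) :
    LexpP τ P ≤ Lexp T τ j := by
  unfold LexpP Lexp
  rw [per_window_eq_perP hj hP, Lhead_eq_LheadP_of_mem_OccSet hj hP]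
  exact Nat.div_le_div_right (by have := le_rend_of_mem_OccSet hτ hj hP; omega)

end Occurrence

theorem statement_13_general
    (τ : ℕ) (T : List ℕ)
    (hτ : 1 ≤ τ)
    (P : List ℕ)
    (hperiodic : Periodic τ P)
    (s : ℕ) (hs : s = LheadP τ P) (H : List ℕ) (hH : H = LrootP τ P)
    (Occa Occs : Set ℕ)
    (hOcca : Occa = {j | j ∈ RsH T τ s H ∩ OccSet P T ∧ LexpP τ P < Lexp T τ j})
    (hOccs : Occs = {j | j ∈ RsH T τ s H ∩ OccSet P T ∧ Lexp T τ j = LexpP τ P}) :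
    OccSet P T = Occa ∪ Occs ∧ Disjoint Occa Occs ∧
    ∀ j ∈ OccSet P T, j ∈ RsH T τ s H ∧ LexpP τ P ≤ Lexp T τ j := by
  subst hs hH hOcca hOccs
  have key : ∀ j ∈ OccSet P T,
      j ∈ RsH T τ (LheadP τ P) (LrootP τ P) ∧ LexpP τ P ≤ Lexp T τ j := fun j hj =>
    ⟨mem_RsH_of_mem_OccSet hj hperiodic, LexpP_le_Lexp_of_mem_OccSet hτ hj hperiodic⟩
  refine ⟨?_, Set.disjoint_left.2 fun j ha hs => ha.2.ne' hs.2, key⟩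
  ext j
  refine ⟨fun hj => ?_, ?_⟩
  · obtain ⟨hmem, hle⟩ := key j hj
    rcases hle.lt_or_eq with hlt | heq
    · exact Or.inl ⟨⟨hmem, hj⟩, hlt⟩
    · exact Or.inr ⟨⟨hmem, hj⟩, heq.symm⟩
  · rintro (⟨⟨-, hj⟩, -⟩ | ⟨⟨-, hj⟩, -⟩) <;> exact hj

/-- Lemma: `Occ(P,T)` is the disjoint union of `Occᵃ(P,T)` and
`Occˢ(P,T)`. -/
theorem statement_13
    (σ n τ : ℕ) (T : List ℕ)
    (hσ : 2 ≤ σ) (hn : 2 ≤ n) (hτ : 1 ≤ τ)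
    (hlen : T.length = n) (halph : ∀ c ∈ T, c < σ)
    (hlast : idx T n = 0) (huniq : ∀ i, 1 ≤ i → i < n → idx T i ≠ 0)
    (P : List ℕ) (m : ℕ) (hm : P.length = m) (halphP : ∀ c ∈ P, c < σ)
    (hperiodic : Periodic τ P)
    (s : ℕ) (hs : s = LheadP τ P) (H : List ℕ) (hH : H = LrootP τ P)
    (Occa Occs : Set ℕ)
    (hOcca : Occa = {j | j ∈ RsH T τ s H ∩ OccSet P T ∧ LexpP τ P < Lexp T τ j})
    (hOccs : Occs = {j | j ∈ RsH T τ s H ∩ OccSet P T ∧ Lexp T τ j = LexpP τ P}) :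
    OccSet P T = Occa ∪ Occs ∧ Disjoint Occa Occs ∧
    ∀ j ∈ OccSet P T, j ∈ RsH T τ s H ∧ LexpP τ P ≤ Lexp T τ j :=
  statement_13_general τ T hτ P hperiodic s hs H hH Occa Occs hOcca hOccs
end CSA
end
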